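/- Let S be a finite set, let Q₁,…,Q_k : {0,1}^m → {0,1} and Q* : {0,1}^m → S be functions, and let Γ : {0,1}^k × S → {0,1}^n be a map. For σ ∈ S define Γ_σ : {0,1}^k → {0,1}^n by Γ_σ(x₁,…,x_k) = Γ(x₁,…,x_k, σ). Let X be uniform on {0,1}^m and let Y be a probability distribution on {0,1}^n. Suppose there are ε ≥ 0 and τ > 0 such that for every σ ∈ S: (i) the distribution of Γ_σ(Q₁(X),…,Q_k(X)) satisfies ‖Γ_σ(Q₁(X),…,Q_k(X)) − Y‖_TV ≥ 1 − ε, and (ii) Pr[Q*(X) = σ] ≥ τ. Then the distribution of Γ(Q₁(X),…,Q_k(X),Q*(X)) satisfies ‖Γ(Q₁(X),…,Q_k(X),Q*(X)) − Y‖_TV ≥ 1 − 4·ε·|S|/τ. -/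

import Mathlib

open Finset

/-- Distribution of `f(X)` on `β` for `X` uniform on the finite type `α`. -/
noncomputable def distOf {α β : Type*} [Fintype α] [DecidableEq β] (f : α → β) (y : β) : ℝ :=
  ((Finset.univ.filter fun x => f x = y).card : ℝ) / (Fintype.card α : ℝ)

/-- Output distribution on `𝔽₂ⁿ` of the tuple `(P₁(X),…,Pₙ(X))` for uniform `X ∈ 𝔽₂^m`. -/
noncomputable def outDist {m n : ℕ} (P : Fin n → (Fin m → ZMod 2) → ZMod 2) :
    (Fin n → ZMod 2) → ℝ :=
  distOf (fun x i => P i x)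

/-- Total variation distance between two distributions on a finite type. -/
noncomputable def tvDist {β : Type*} [Fintype β] (μ ν : β → ℝ) : ℝ :=
  (1 / 2) * ∑ y, |μ y - ν y|

/-- The distribution `Ber(1/3)^{⊗n}` on `𝔽₂ⁿ`. -/
noncomputable def ber13 {n : ℕ} (y : Fin n → ZMod 2) : ℝ :=
  (1 / 3 : ℝ) ^ (Finset.univ.filter fun i => y i = 1).card *
    (2 / 3 : ℝ) ^ (n - (Finset.univ.filter fun i => y i = 1).card)

/-- `P : 𝔽₂^m → 𝔽₂` has degree at most `d`. -/
def DegLE {m : ℕ} (d : ℕ) (P : (Fin m → ZMod 2) → ZMod 2) : Prop :=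
  ∃ p : MvPolynomial (Fin m) (ZMod 2), p.totalDegree ≤ d ∧ ∀ x, MvPolynomial.eval x p = P x

/-- `rank_{d'}(P) ≤ k`. -/
def RankLE {m : ℕ} (d' k : ℕ) (P : (Fin m → ZMod 2) → ZMod 2) : Prop :=
  ∃ (Q : Fin k → (Fin m → ZMod 2) → ZMod 2) (Γ : (Fin k → ZMod 2) → ZMod 2),
    (∀ j, DegLE d' (Q j)) ∧ ∀ x, P x = Γ (fun j => Q j x)

/-- `Pr_{X uniform}[P(X) = 1]`. -/
noncomputable def prOne {m : ℕ} (P : (Fin m → ZMod 2) → ZMod 2) : ℝ :=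
  distOf P 1

/-!
For probability vectors, `tvDist μ Y = 1 - ∑ y, min (μ y) (Y y)`, so a lower bound on the
distance is an upper bound on the overlap `∑ y, min (μ y) (Y y)`. Splitting the sample space
according to the value `σ` of `Q*` shows that the law of `Γ(Q(X), Q*(X))` is dominated pointwise
by `∑ σ, law of Γ_σ(Q(X))`, and overlap with `Y` is subadditive, so the overlap is at most
`|S| ε`. Since `τ ≤ 1`, this gives `1 - |S| ε ≥ 1 - 4 ε |S| / τ`.
-/

section distOf

variable {α β : Type*} [Fintype α] [DecidableEq β]

lemma distOf_nonneg (f : α → β) (y : β) : 0 ≤ distOf f y := by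
  unfold distOf; positivity

lemma distOf_le_one [Nonempty α] (f : α → β) (y : β) : distOf f y ≤ 1 := by
  unfold distOf
  rw [div_le_one (by exact_mod_cast Fintype.card_pos)]
  exact_mod_cast card_filter_le _ _

lemma sum_distOf [Nonempty α] [Fintype β] (f : α → β) : ∑ y, distOf f y = 1 := by
  unfold distOf
  rw [← sum_div, div_eq_one_iff_eq (by exact_mod_cast Fintype.card_ne_zero)]
  exact_mod_cast (card_eq_sum_card_fiberwise fun x _ => mem_univ (f x)).symm

lemma distOf_le_sum_distOf {S : Type*} [Fintype S] [DecidableEq S]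
    (f : α → S → β) (sel : α → S) (y : β) :
    distOf (fun x => f x (sel x)) y ≤ ∑ σ, distOf (fun x => f x σ) y := by
  unfold distOf
  rw [← sum_div]
  gcongr
  have hfibres : #{x | f x (sel x) = y} ≤ ∑ σ, #{x | f x σ = y} := by
    rw [card_eq_sum_card_fiberwise fun x _ => mem_univ (sel x)]
    refine sum_le_sum fun σ _ => card_le_card fun x hx => ?_
    simp only [mem_filter, mem_univ, true_and] at hx ⊢
    exact hx.2 ▸ hx.1
  exact_mod_cast hfibres

end distOf

lemma tvDist_eq_one_sub_sum_min {β : Type*} [Fintype β] (μ ν : β → ℝ)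
    (hμ : ∑ y, μ y = 1) (hν : ∑ y, ν y = 1) :
    tvDist μ ν = 1 - ∑ y, min (μ y) (ν y) := by
  have habs : ∀ y, |μ y - ν y| = μ y + ν y - 2 * min (μ y) (ν y) := by
    intro y
    rcases le_total (μ y) (ν y) with h | h
    · rw [abs_of_nonpos (by linarith), min_eq_left h]; ring
    · rw [abs_of_nonneg (by linarith), min_eq_right h]; ring
  unfold tvDist
  simp_rw [habs]
  rw [sum_sub_distrib, sum_add_distrib, hμ, hν, ← mul_sum]
  ring

lemma min_sum_le_sum_min {ι : Type*} (s : Finset ι) (a : ι → ℝ) {b : ℝ}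
    (ha : ∀ i ∈ s, 0 ≤ a i) (hb : 0 ≤ b) :
    min (∑ i ∈ s, a i) b ≤ ∑ i ∈ s, min (a i) b := by
  classical
  induction s using Finset.induction_on with
  | empty => simp
  | insert j s hj ih =>
    rw [sum_insert hj, sum_insert hj]
    have haj : 0 ≤ a j := ha j (mem_insert_self j s)
    have has : 0 ≤ ∑ i ∈ s, a i := sum_nonneg fun i hi => ha i (mem_insert_of_mem hi)
    have hsplit : min (a j + ∑ i ∈ s, a i) b ≤ min (a j) b + min (∑ i ∈ s, a i) b := by
      simp only [min_def]
      split_ifs <;> linarith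
    exact hsplit.trans (add_le_add le_rfl (ih fun i hi => ha i (mem_insert_of_mem hi)))

/-- A union bound: the overlap `∑ y, min (μ y) (Y y)` is monotone and subadditive in `μ`. -/
lemma one_sub_card_mul_le_tvDist {ι β : Type*} [Fintype ι] [Fintype β]
    (μ Y : β → ℝ) (ν : ι → β → ℝ) (ε : ℝ)
    (hμ : ∑ y, μ y = 1) (hY0 : ∀ y, 0 ≤ Y y) (hY1 : ∑ y, Y y = 1)
    (hν0 : ∀ i y, 0 ≤ ν i y) (hν1 : ∀ i, ∑ y, ν i y = 1)
    (hμν : ∀ y, μ y ≤ ∑ i, ν i y) (hfar : ∀ i, 1 - ε ≤ tvDist (ν i) Y) :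
    1 - Fintype.card ι * ε ≤ tvDist μ Y := by
  have hoverlap : ∀ i, ∑ y, min (ν i y) (Y y) ≤ ε := fun i => by
    have := hfar i
    rw [tvDist_eq_one_sub_sum_min _ _ (hν1 i) hY1] at this
    linarith
  have hsum : ∑ y, min (μ y) (Y y) ≤ Fintype.card ι * ε :=
    calc ∑ y, min (μ y) (Y y)
        ≤ ∑ y, ∑ i, min (ν i y) (Y y) := sum_le_sum fun y _ =>
          (min_le_min_right _ (hμν y)).trans
            (min_sum_le_sum_min _ _ (fun i _ => hν0 i y) (hY0 y))
      _ = ∑ i, ∑ y, min (ν i y) (Y y) := sum_comm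
      _ ≤ ∑ _i : ι, ε := sum_le_sum fun i _ => hoverlap i
      _ = Fintype.card ι * ε := by simp
  rw [tvDist_eq_one_sub_sum_min _ _ hμ hY1]
  linarith

/-- fixing coordinates. -/
theorem tv_dist_fixing_coordinates {S : Type*} [Fintype S] [DecidableEq S]
    (m k n : ℕ)
    (Q : Fin k → (Fin m → Bool) → Bool) (Qstar : (Fin m → Bool) → S)
    (Γ : (Fin k → Bool) × S → (Fin n → Bool))
    (Y : (Fin n → Bool) → ℝ) (hY0 : ∀ y, 0 ≤ Y y) (hY1 : ∑ y, Y y = 1)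
    (ε τ : ℝ) (hε : 0 ≤ ε) (hτ : 0 < τ)
    (h1 : ∀ σ : S, tvDist (distOf (fun x => Γ ((fun j => Q j x), σ))) Y ≥ 1 - ε)
    (h2 : ∀ σ : S, distOf Qstar σ ≥ τ) :
    tvDist (distOf (fun x => Γ ((fun j => Q j x), Qstar x))) Y ≥
      1 - 4 * ε * (Fintype.card S : ℝ) / τ := by
  have hτ1 : τ ≤ 1 := (h2 (Qstar fun _ => false)).trans (distOf_le_one _ _)
  have hunion := one_sub_card_mul_le_tvDist _ Y (fun σ => distOf fun x => Γ ((fun j => Q j x), σ))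
    ε (sum_distOf _) hY0 hY1 (fun _ _ => distOf_nonneg _ _) (fun _ => sum_distOf _)
    (distOf_le_sum_distOf (fun x σ => Γ ((fun j => Q j x), σ)) Qstar) h1
  have hweaken : Fintype.card S * ε ≤ 4 * ε * Fintype.card S / τ := by
    rw [le_div_iff₀ hτ]
    nlinarith [mul_nonneg hε (Nat.cast_nonneg (α := ℝ) (Fintype.card S))]
  linarith
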